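/- Let Y₁ ⊆ ℝ^{N₁} and Y₂ ⊆ ℝ^{N₂} be open sets, and F₁ : Y₁ → ℝ, F₂ : Y₂ → ℝ smooth functions with everywhere nondegenerate Hessians, each satisfying the parallel cubic form PDE on its domain. Let c₁, c₂ be nonzero real numbers. Then the function Φ : Y₁ × Y₂ → ℝ, Φ(x₁,x₂) = c₁·F₁(x₁) + c₂·F₂(x₂), has everywhere nondegenerate Hessian and satisfies the parallel cubic form PDE on Y₁ × Y₂ ⊆ ℝ^{N₁+N₂}. -/

import Mathlib

/-- Nondegeneracy of the Hessian of `F` at every point of `Y`. -/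
def NondegHessOn {E : Type*} [NormedAddCommGroup E] [NormedSpace ℝ E]
    (F : E → ℝ) (Y : Set E) : Prop :=
  ∀ x ∈ Y, ∀ u : E, (∀ v : E, iteratedFDerivWithin ℝ 2 F Y x ![u, v] = 0) → u = 0

/-- The parallel cubic form PDE
`D⁴F(x)[a,b,c,d] = ½·(B_x(D³F[a,b,·],D³F[c,d,·]) + B_x(D³F[a,c,·],D³F[b,d,·]) +
B_x(D³F[a,d,·],D³F[b,c,·]))`, where `B_x` is the inverse of the Hessian viewed as a bilinear
form on the dual, expressed via any right inverse `Binv` of the Hessian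
(`B_x(D³F[a,b,·], ψ) = D³F(x)[a,b, Binv ψ]`). -/
def SatisfiesPCF {E : Type*} [NormedAddCommGroup E] [NormedSpace ℝ E]
    (F : E → ℝ) (Y : Set E) : Prop :=
  ∀ x ∈ Y, ∀ Binv : (E → ℝ) → E,
    (∀ φ : E → ℝ, IsLinearMap ℝ φ →
      ∀ v : E, iteratedFDerivWithin ℝ 2 F Y x ![Binv φ, v] = φ v) →
    ∀ a b c d : E,
      iteratedFDerivWithin ℝ 4 F Y x ![a, b, c, d] =
        (1 / 2) * (iteratedFDerivWithin ℝ 3 F Y x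
            ![a, b, Binv fun w => iteratedFDerivWithin ℝ 3 F Y x ![c, d, w]]
          + iteratedFDerivWithin ℝ 3 F Y x
            ![a, c, Binv fun w => iteratedFDerivWithin ℝ 3 F Y x ![b, d, w]]
          + iteratedFDerivWithin ℝ 3 F Y x
            ![a, d, Binv fun w => iteratedFDerivWithin ℝ 3 F Y x ![b, c, w]])

section helpers
variable {E : Type*} [NormedAddCommGroup E] [NormedSpace ℝ E]

lemma upd2_0 (a b v : E) : Function.update ![a, v] 0 b = ![b, v] := by
  funext i; fin_cases i <;> simp

lemma upd3_2 (a b u w : E) : Function.update ![a, b, u] 2 w = ![a, b, w] := by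
  funext i; fin_cases i <;> simp

lemma map2_add_left (T : ContinuousMultilinearMap ℝ (fun _ : Fin 2 => E) ℝ) (a b v : E) :
    T ![a + b, v] = T ![a, v] + T ![b, v] := by
  have := T.map_update_add ![a, v] 0 a b
  simpa [upd2_0] using this

lemma map2_smul_left (T : ContinuousMultilinearMap ℝ (fun _ : Fin 2 => E) ℝ) (r : ℝ) (a v : E) :
    T ![r • a, v] = r * T ![a, v] := by
  have := T.map_update_smul ![a, v] 0 r a
  simpa [upd2_0] using this

lemma map2_sub_left (T : ContinuousMultilinearMap ℝ (fun _ : Fin 2 => E) ℝ) (a b v : E) :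
    T ![a - b, v] = T ![a, v] - T ![b, v] := by
  have := T.toMultilinearMap.map_update_sub ![a, v] 0 a b
  simpa [upd2_0] using this

lemma map2_zero_right (T : ContinuousMultilinearMap ℝ (fun _ : Fin 2 => E) ℝ) (a : E) :
    T ![a, 0] = 0 := T.map_coord_zero 1 rfl

lemma map3_linear (T : ContinuousMultilinearMap ℝ (fun _ : Fin 3 => E) ℝ) (a b : E) :
    IsLinearMap ℝ (fun w => T ![a, b, w]) := by
  constructor
  · intro u v
    have := T.map_update_add ![a, b, u] 2 u v
    simpa [upd3_2] using this
  · intro r u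
    have := T.map_update_smul ![a, b, u] 2 r u
    simpa [upd3_2] using this

end helpers

lemma key_fst {N₁ N₂ : ℕ} {Y₁ : Set (Fin N₁ → ℝ)} {Y₂ : Set (Fin N₂ → ℝ)}
    (hY₁ : IsOpen Y₁) (hY₂ : IsOpen Y₂)
    {F₁ : (Fin N₁ → ℝ) → ℝ} (hF₁ : ContDiffOn ℝ (⊤ : ℕ∞) F₁ Y₁)
    (n : ℕ) {x : (Fin N₁ → ℝ) × (Fin N₂ → ℝ)} (hx : x ∈ Y₁ ×ˢ Y₂) :
    iteratedFDerivWithin ℝ n (fun p : (Fin N₁ → ℝ) × (Fin N₂ → ℝ) => F₁ p.1) (Y₁ ×ˢ Y₂) x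
      = (iteratedFDerivWithin ℝ n F₁ Y₁ x.1).compContinuousLinearMap
          (fun _ => ContinuousLinearMap.fst ℝ (Fin N₁ → ℝ) (Fin N₂ → ℝ)) := by
  have h1 : Y₁ ×ˢ Y₂ = (Prod.fst ⁻¹' Y₁ : Set ((Fin N₁ → ℝ) × (Fin N₂ → ℝ))) ∩ Prod.snd ⁻¹' Y₂ :=
    Set.prod_eq Y₁ Y₂
  rw [h1, iteratedFDerivWithin_inter_open (u := Prod.snd ⁻¹' Y₂)
    (hY₂.preimage continuous_snd) hx.2]
  have := (ContinuousLinearMap.fst ℝ (Fin N₁ → ℝ) (Fin N₂ → ℝ)).iteratedFDerivWithin_comp_right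
    hF₁ hY₁.uniqueDiffOn ((hY₁.preimage continuous_fst).uniqueDiffOn) (x := x) hx.1
    (i := n) (by exact_mod_cast le_top)
  simpa [Function.comp_def] using this

lemma key_snd {N₁ N₂ : ℕ} {Y₁ : Set (Fin N₁ → ℝ)} {Y₂ : Set (Fin N₂ → ℝ)}
    (hY₁ : IsOpen Y₁) (hY₂ : IsOpen Y₂)
    {F₂ : (Fin N₂ → ℝ) → ℝ} (hF₂ : ContDiffOn ℝ (⊤ : ℕ∞) F₂ Y₂)
    (n : ℕ) {x : (Fin N₁ → ℝ) × (Fin N₂ → ℝ)} (hx : x ∈ Y₁ ×ˢ Y₂) :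
    iteratedFDerivWithin ℝ n (fun p : (Fin N₁ → ℝ) × (Fin N₂ → ℝ) => F₂ p.2) (Y₁ ×ˢ Y₂) x
      = (iteratedFDerivWithin ℝ n F₂ Y₂ x.2).compContinuousLinearMap
          (fun _ => ContinuousLinearMap.snd ℝ (Fin N₁ → ℝ) (Fin N₂ → ℝ)) := by
  have h1 : Y₁ ×ˢ Y₂ = (Prod.fst ⁻¹' Y₁ : Set ((Fin N₁ → ℝ) × (Fin N₂ → ℝ))) ∩ Prod.snd ⁻¹' Y₂ :=
    Set.prod_eq Y₁ Y₂
  rw [h1, Set.inter_comm, iteratedFDerivWithin_inter_open (u := Prod.fst ⁻¹' Y₁)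
    (hY₁.preimage continuous_fst) hx.1]
  have := (ContinuousLinearMap.snd ℝ (Fin N₁ → ℝ) (Fin N₂ → ℝ)).iteratedFDerivWithin_comp_right
    hF₂ hY₂.uniqueDiffOn ((hY₂.preimage continuous_snd).uniqueDiffOn) (x := x) hx.2
    (i := n) (by exact_mod_cast le_top)
  simpa [Function.comp_def] using this

lemma key_iter {N₁ N₂ : ℕ} {Y₁ : Set (Fin N₁ → ℝ)} {Y₂ : Set (Fin N₂ → ℝ)}
    (hY₁ : IsOpen Y₁) (hY₂ : IsOpen Y₂)
    {F₁ : (Fin N₁ → ℝ) → ℝ} {F₂ : (Fin N₂ → ℝ) → ℝ}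
    (hF₁ : ContDiffOn ℝ (⊤ : ℕ∞) F₁ Y₁) (hF₂ : ContDiffOn ℝ (⊤ : ℕ∞) F₂ Y₂)
    (c₁ c₂ : ℝ) (n : ℕ) {x : (Fin N₁ → ℝ) × (Fin N₂ → ℝ)} (hx : x ∈ Y₁ ×ˢ Y₂)
    (m : Fin n → (Fin N₁ → ℝ) × (Fin N₂ → ℝ)) :
    iteratedFDerivWithin ℝ n (fun p : (Fin N₁ → ℝ) × (Fin N₂ → ℝ) =>
        c₁ * F₁ p.1 + c₂ * F₂ p.2) (Y₁ ×ˢ Y₂) x m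
      = c₁ * iteratedFDerivWithin ℝ n F₁ Y₁ x.1 (fun i => (m i).1)
        + c₂ * iteratedFDerivWithin ℝ n F₂ Y₂ x.2 (fun i => (m i).2) := by
  have hS : IsOpen (Y₁ ×ˢ Y₂) := hY₁.prod hY₂
  have hSu : UniqueDiffOn ℝ (Y₁ ×ˢ Y₂) := hS.uniqueDiffOn
  set f : (Fin N₁ → ℝ) × (Fin N₂ → ℝ) → ℝ := fun p => c₁ * F₁ p.1 with hf
  set g : (Fin N₁ → ℝ) × (Fin N₂ → ℝ) → ℝ := fun p => c₂ * F₂ p.2 with hg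
  have hfc : ContDiffOn ℝ (⊤ : ℕ∞) f (Y₁ ×ˢ Y₂) := by
    have : ContDiffOn ℝ (⊤ : ℕ∞) (fun p : (Fin N₁ → ℝ) × (Fin N₂ → ℝ) => F₁ p.1) (Y₁ ×ˢ Y₂) :=
      hF₁.comp contDiff_fst.contDiffOn (fun p hp => hp.1)
    exact this.const_smul c₁
  have hgc : ContDiffOn ℝ (⊤ : ℕ∞) g (Y₁ ×ˢ Y₂) := by
    have : ContDiffOn ℝ (⊤ : ℕ∞) (fun p : (Fin N₁ → ℝ) × (Fin N₂ → ℝ) => F₂ p.2) (Y₁ ×ˢ Y₂) :=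
      hF₂.comp contDiff_snd.contDiffOn (fun p hp => hp.2)
    exact this.const_smul c₂
  have hadd := iteratedFDerivWithin_add_apply' (i := n) ((hfc.of_le (by exact_mod_cast le_top)) x hx)
    ((hgc.of_le (by exact_mod_cast le_top)) x hx) hSu hx
  have hf1 : iteratedFDerivWithin ℝ n f (Y₁ ×ˢ Y₂) x m
      = c₁ * iteratedFDerivWithin ℝ n F₁ Y₁ x.1 (fun i => (m i).1) := by
    have e1 : f = c₁ • (fun p : (Fin N₁ → ℝ) × (Fin N₂ → ℝ) => F₁ p.1) := by
      funext p; simp [hf, smul_eq_mul]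
    have hcomp : ContDiffOn ℝ (n : ℕ∞) (fun p : (Fin N₁ → ℝ) × (Fin N₂ → ℝ) => F₁ p.1)
        (Y₁ ×ˢ Y₂) := (hF₁.comp contDiff_fst.contDiffOn (fun p hp => hp.1)).of_le (by exact_mod_cast le_top)
    rw [e1, iteratedFDerivWithin_const_smul_apply (hcomp x hx) hSu hx, key_fst hY₁ hY₂ hF₁ n hx]
    simp [smul_eq_mul]
  have hg1 : iteratedFDerivWithin ℝ n g (Y₁ ×ˢ Y₂) x m
      = c₂ * iteratedFDerivWithin ℝ n F₂ Y₂ x.2 (fun i => (m i).2) := by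
    have e1 : g = c₂ • (fun p : (Fin N₁ → ℝ) × (Fin N₂ → ℝ) => F₂ p.2) := by
      funext p; simp [hg, smul_eq_mul]
    have hcomp : ContDiffOn ℝ (n : ℕ∞) (fun p : (Fin N₁ → ℝ) × (Fin N₂ → ℝ) => F₂ p.2)
        (Y₁ ×ˢ Y₂) := (hF₂.comp contDiff_snd.contDiffOn (fun p hp => hp.2)).of_le (by exact_mod_cast le_top)
    rw [e1, iteratedFDerivWithin_const_smul_apply (hcomp x hx) hSu hx, key_snd hY₁ hY₂ hF₂ n hx]
    simp [smul_eq_mul]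
  calc iteratedFDerivWithin ℝ n (fun p : (Fin N₁ → ℝ) × (Fin N₂ → ℝ) =>
        c₁ * F₁ p.1 + c₂ * F₂ p.2) (Y₁ ×ˢ Y₂) x m
      = iteratedFDerivWithin ℝ n (fun p => f p + g p) (Y₁ ×ˢ Y₂) x m := rfl
    _ = iteratedFDerivWithin ℝ n f (Y₁ ×ˢ Y₂) x m
        + iteratedFDerivWithin ℝ n g (Y₁ ×ˢ Y₂) x m := by
        rw [hadd]; rfl
    _ = _ := by rw [hf1, hg1]


section helpers2
variable {E : Type*} [NormedAddCommGroup E] [NormedSpace ℝ E]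

lemma map3_add (T : ContinuousMultilinearMap ℝ (fun _ : Fin 3 => E) ℝ) (a b u v : E) :
    T ![a, b, u + v] = T ![a, b, u] + T ![a, b, v] := (map3_linear T a b).map_add u v

lemma map3_smul (T : ContinuousMultilinearMap ℝ (fun _ : Fin 3 => E) ℝ) (a b : E) (r : ℝ)
    (u : E) : T ![a, b, r • u] = r * T ![a, b, u] := (map3_linear T a b).map_smul r u

lemma map3_zero (T : ContinuousMultilinearMap ℝ (fun _ : Fin 3 => E) ℝ) (a b : E) :
    T ![a, b, 0] = 0 := T.map_coord_zero 2 rfl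

end helpers2

/-- If `F₁`, `F₂` are smooth with everywhere nondegenerate Hessians and satisfy
the parallel cubic form PDE on open sets `Y₁`, `Y₂`, and `c₁, c₂ ≠ 0`, then
`Φ(x₁,x₂) = c₁F₁(x₁) + c₂F₂(x₂)` has everywhere nondegenerate Hessian and satisfies the
parallel cubic form PDE on `Y₁ × Y₂`. -/
theorem stmt_5 {N₁ N₂ : ℕ} (Y₁ : Set (Fin N₁ → ℝ)) (Y₂ : Set (Fin N₂ → ℝ))
    (hY₁ : IsOpen Y₁) (hY₂ : IsOpen Y₂)
    (F₁ : (Fin N₁ → ℝ) → ℝ) (F₂ : (Fin N₂ → ℝ) → ℝ)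
    (hF₁ : ContDiffOn ℝ (⊤ : ℕ∞) F₁ Y₁) (hF₂ : ContDiffOn ℝ (⊤ : ℕ∞) F₂ Y₂)
    (hnd₁ : NondegHessOn F₁ Y₁) (hnd₂ : NondegHessOn F₂ Y₂)
    (hPDE₁ : SatisfiesPCF F₁ Y₁) (hPDE₂ : SatisfiesPCF F₂ Y₂)
    (c₁ c₂ : ℝ) (hc₁ : c₁ ≠ 0) (hc₂ : c₂ ≠ 0) :
    NondegHessOn (fun p : (Fin N₁ → ℝ) × (Fin N₂ → ℝ) => c₁ * F₁ p.1 + c₂ * F₂ p.2)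
        (Y₁ ×ˢ Y₂)
    ∧ SatisfiesPCF (fun p : (Fin N₁ → ℝ) × (Fin N₂ → ℝ) => c₁ * F₁ p.1 + c₂ * F₂ p.2)
        (Y₁ ×ˢ Y₂) := by
  set Φ : (Fin N₁ → ℝ) × (Fin N₂ → ℝ) → ℝ := fun p => c₁ * F₁ p.1 + c₂ * F₂ p.2 with hΦ
  have key2 : ∀ x ∈ Y₁ ×ˢ Y₂, ∀ u v : (Fin N₁ → ℝ) × (Fin N₂ → ℝ),
      iteratedFDerivWithin ℝ 2 Φ (Y₁ ×ˢ Y₂) x ![u, v]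
        = c₁ * iteratedFDerivWithin ℝ 2 F₁ Y₁ x.1 ![u.1, v.1]
          + c₂ * iteratedFDerivWithin ℝ 2 F₂ Y₂ x.2 ![u.2, v.2] := by
    intro x hx u v
    have h := key_iter hY₁ hY₂ hF₁ hF₂ c₁ c₂ 2 hx ![u, v]
    have e1 : (fun i => ((![u, v]) i).1) = ![u.1, v.1] := by funext i; fin_cases i <;> rfl
    have e2 : (fun i => ((![u, v]) i).2) = ![u.2, v.2] := by funext i; fin_cases i <;> rfl
    rw [e1, e2] at h; exact h
  have key3 : ∀ x ∈ Y₁ ×ˢ Y₂, ∀ u v w : (Fin N₁ → ℝ) × (Fin N₂ → ℝ),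
      iteratedFDerivWithin ℝ 3 Φ (Y₁ ×ˢ Y₂) x ![u, v, w]
        = c₁ * iteratedFDerivWithin ℝ 3 F₁ Y₁ x.1 ![u.1, v.1, w.1]
          + c₂ * iteratedFDerivWithin ℝ 3 F₂ Y₂ x.2 ![u.2, v.2, w.2] := by
    intro x hx u v w
    have h := key_iter hY₁ hY₂ hF₁ hF₂ c₁ c₂ 3 hx ![u, v, w]
    have e1 : (fun i => ((![u, v, w]) i).1) = ![u.1, v.1, w.1] := by
      funext i; fin_cases i <;> rfl
    have e2 : (fun i => ((![u, v, w]) i).2) = ![u.2, v.2, w.2] := by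
      funext i; fin_cases i <;> rfl
    rw [e1, e2] at h; exact h
  have key4 : ∀ x ∈ Y₁ ×ˢ Y₂, ∀ u v w z : (Fin N₁ → ℝ) × (Fin N₂ → ℝ),
      iteratedFDerivWithin ℝ 4 Φ (Y₁ ×ˢ Y₂) x ![u, v, w, z]
        = c₁ * iteratedFDerivWithin ℝ 4 F₁ Y₁ x.1 ![u.1, v.1, w.1, z.1]
          + c₂ * iteratedFDerivWithin ℝ 4 F₂ Y₂ x.2 ![u.2, v.2, w.2, z.2] := by
    intro x hx u v w z
    have h := key_iter hY₁ hY₂ hF₁ hF₂ c₁ c₂ 4 hx ![u, v, w, z]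
    have e1 : (fun i => ((![u, v, w, z]) i).1) = ![u.1, v.1, w.1, z.1] := by
      funext i; fin_cases i <;> rfl
    have e2 : (fun i => ((![u, v, w, z]) i).2) = ![u.2, v.2, w.2, z.2] := by
      funext i; fin_cases i <;> rfl
    rw [e1, e2] at h; exact h
  constructor
  · intro x hx u hu
    have h1 : u.1 = 0 := by
      apply hnd₁ x.1 hx.1
      intro v₁
      have := hu (v₁, 0)
      rw [key2 x hx u (v₁, 0)] at this
      simp only [map2_zero_right] at this
      have : c₁ * iteratedFDerivWithin ℝ 2 F₁ Y₁ x.1 ![u.1, v₁] = 0 := by linarith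
      exact (mul_eq_zero.1 this).resolve_left hc₁
    have h2 : u.2 = 0 := by
      apply hnd₂ x.2 hx.2
      intro v₂
      have := hu (0, v₂)
      rw [key2 x hx u (0, v₂)] at this
      simp only [map2_zero_right] at this
      have : c₂ * iteratedFDerivWithin ℝ 2 F₂ Y₂ x.2 ![u.2, v₂] = 0 := by linarith
      exact (mul_eq_zero.1 this).resolve_left hc₂
    exact Prod.ext h1 h2
  · intro x hx Binv hBinv a b c d
    have hB₁prop : ∀ φ : (Fin N₁ → ℝ) → ℝ, IsLinearMap ℝ φ → ∀ v,
        iteratedFDerivWithin ℝ 2 F₁ Y₁ x.1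
          ![(fun ψ : (Fin N₁ → ℝ) → ℝ => c₁ • (Binv (fun p => ψ p.1)).1) φ, v] = φ v := by
      intro φ hφ v
      have hlin : IsLinearMap ℝ (fun p : (Fin N₁ → ℝ) × (Fin N₂ → ℝ) => φ p.1) :=
        ⟨fun p q => hφ.map_add p.1 q.1, fun r p => hφ.map_smul r p.1⟩
      have h := hBinv _ hlin (v, 0)
      rw [key2 x hx _ (v, 0)] at h
      simp only [map2_zero_right, mul_zero, add_zero] at h
      simpa [map2_smul_left] using h
    have hB₂prop : ∀ φ : (Fin N₂ → ℝ) → ℝ, IsLinearMap ℝ φ → ∀ v,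
        iteratedFDerivWithin ℝ 2 F₂ Y₂ x.2
          ![(fun ψ : (Fin N₂ → ℝ) → ℝ => c₂ • (Binv (fun p => ψ p.2)).2) φ, v] = φ v := by
      intro φ hφ v
      have hlin : IsLinearMap ℝ (fun p : (Fin N₁ → ℝ) × (Fin N₂ → ℝ) => φ p.2) :=
        ⟨fun p q => hφ.map_add p.2 q.2, fun r p => hφ.map_smul r p.2⟩
      have h := hBinv _ hlin (0, v)
      rw [key2 x hx _ (0, v)] at h
      simp only [map2_zero_right, mul_zero, zero_add] at h
      simpa [map2_smul_left] using h
    have hΨlin : ∀ p q : (Fin N₁ → ℝ) × (Fin N₂ → ℝ),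
        IsLinearMap ℝ (fun w => iteratedFDerivWithin ℝ 3 Φ (Y₁ ×ˢ Y₂) x ![p, q, w]) := by
      intro p q
      constructor
      · intro w w'
        rw [key3 x hx p q (w + w'), key3 x hx p q w, key3 x hx p q w']
        simp only [Prod.fst_add, Prod.snd_add, map3_add]
        ring
      · intro r w
        rw [key3 x hx p q (r • w), key3 x hx p q w]
        simp only [Prod.smul_fst, Prod.smul_snd, map3_smul, smul_eq_mul]
        ring
    have hz1 : ∀ p q : (Fin N₁ → ℝ) × (Fin N₂ → ℝ),
        (Binv fun w => iteratedFDerivWithin ℝ 3 Φ (Y₁ ×ˢ Y₂) x ![p, q, w]).1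
          = c₁ • (Binv fun w : (Fin N₁ → ℝ) × (Fin N₂ → ℝ) =>
              iteratedFDerivWithin ℝ 3 F₁ Y₁ x.1 ![p.1, q.1, w.1]).1 := by
      intro p q
      have hsub : (Binv fun w => iteratedFDerivWithin ℝ 3 Φ (Y₁ ×ˢ Y₂) x ![p, q, w]).1
          - c₁ • (Binv fun w : (Fin N₁ → ℝ) × (Fin N₂ → ℝ) =>
              iteratedFDerivWithin ℝ 3 F₁ Y₁ x.1 ![p.1, q.1, w.1]).1 = 0 := by
        apply hnd₁ x.1 hx.1
        intro v₁
        rw [map2_sub_left]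
        have h1 : iteratedFDerivWithin ℝ 2 F₁ Y₁ x.1
            ![(Binv fun w => iteratedFDerivWithin ℝ 3 Φ (Y₁ ×ˢ Y₂) x ![p, q, w]).1, v₁]
            = iteratedFDerivWithin ℝ 3 F₁ Y₁ x.1 ![p.1, q.1, v₁] := by
          have h := hBinv _ (hΨlin p q) (v₁, 0)
          rw [key2 x hx _ (v₁, 0), key3 x hx p q (v₁, 0)] at h
          simp only [map2_zero_right, map3_zero, mul_zero, add_zero] at h
          exact mul_left_cancel₀ hc₁ h
        have h2 := hB₁prop (fun w₁ => iteratedFDerivWithin ℝ 3 F₁ Y₁ x.1 ![p.1, q.1, w₁])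
          (map3_linear _ _ _) v₁
        simp only at h2
        rw [h1, h2, sub_self]
      exact sub_eq_zero.1 hsub
    have hz2 : ∀ p q : (Fin N₁ → ℝ) × (Fin N₂ → ℝ),
        (Binv fun w => iteratedFDerivWithin ℝ 3 Φ (Y₁ ×ˢ Y₂) x ![p, q, w]).2
          = c₂ • (Binv fun w : (Fin N₁ → ℝ) × (Fin N₂ → ℝ) =>
              iteratedFDerivWithin ℝ 3 F₂ Y₂ x.2 ![p.2, q.2, w.2]).2 := by
      intro p q
      have hsub : (Binv fun w => iteratedFDerivWithin ℝ 3 Φ (Y₁ ×ˢ Y₂) x ![p, q, w]).2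
          - c₂ • (Binv fun w : (Fin N₁ → ℝ) × (Fin N₂ → ℝ) =>
              iteratedFDerivWithin ℝ 3 F₂ Y₂ x.2 ![p.2, q.2, w.2]).2 = 0 := by
        apply hnd₂ x.2 hx.2
        intro v₂
        rw [map2_sub_left]
        have h1 : iteratedFDerivWithin ℝ 2 F₂ Y₂ x.2
            ![(Binv fun w => iteratedFDerivWithin ℝ 3 Φ (Y₁ ×ˢ Y₂) x ![p, q, w]).2, v₂]
            = iteratedFDerivWithin ℝ 3 F₂ Y₂ x.2 ![p.2, q.2, v₂] := by
          have h := hBinv _ (hΨlin p q) (0, v₂)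
          rw [key2 x hx _ (0, v₂), key3 x hx p q (0, v₂)] at h
          simp only [map2_zero_right, map3_zero, mul_zero, add_zero, zero_add] at h
          exact mul_left_cancel₀ hc₂ h
        have h2 := hB₂prop (fun w₂ => iteratedFDerivWithin ℝ 3 F₂ Y₂ x.2 ![p.2, q.2, w₂])
          (map3_linear _ _ _) v₂
        simp only at h2
        rw [h1, h2, sub_self]
      exact sub_eq_zero.1 hsub
    have e₁ := hPDE₁ x.1 hx.1 (fun ψ : (Fin N₁ → ℝ) → ℝ => c₁ • (Binv (fun p => ψ p.1)).1)
      hB₁prop a.1 b.1 c.1 d.1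
    have e₂ := hPDE₂ x.2 hx.2 (fun ψ : (Fin N₂ → ℝ) → ℝ => c₂ • (Binv (fun p => ψ p.2)).2)
      hB₂prop a.2 b.2 c.2 d.2
    simp only at e₁ e₂
    rw [key4 x hx a b c d,
      key3 x hx a b (Binv fun w => iteratedFDerivWithin ℝ 3 Φ (Y₁ ×ˢ Y₂) x ![c, d, w]),
      key3 x hx a c (Binv fun w => iteratedFDerivWithin ℝ 3 Φ (Y₁ ×ˢ Y₂) x ![b, d, w]),
      key3 x hx a d (Binv fun w => iteratedFDerivWithin ℝ 3 Φ (Y₁ ×ˢ Y₂) x ![b, c, w]),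
      hz1 c d, hz2 c d, hz1 b d, hz2 b d, hz1 b c, hz2 b c, e₁, e₂]
    ring
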